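/- arXiv:1004.4269 — 6 statements merged into one kernel-verified Lean document; each statement's English description precedes it below -/
import Mathlib

section
/- Let I be a vertical segment contained in the line {(x,y) : x = θ} of length |I|. Suppose two non-parallel integer lines L_1 = L(A_1,B_1,C_1) and L_2 = L(A_2,B_2,C_2) (with B_i > 0) both intersect I, and their intersection point is P = (p/q, r/q) with p, r, q integers, q > 0, gcd(p,r,q) = 1. Then (i) |qθ − p| ≤ |I|·B_1·B_2, and (ii) q ≤ 2·max(|A_1|,|A_2|)·max(B_1,B_2). -/
/-!
Let `D = A₁B₂ − A₂B₁`. Cramer's rule gives `D·p = q·(B₁C₂ − B₂C₁)` and `D·r = q·(A₁C₂ − A₂C₁)`,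
so `q ∣ D·gcd(p, r)` and, as `gcd(p, r, q) = 1`, `q ∣ D`; hence `q ≤ |D| ≤ 2·max|Aᵢ|·max Bᵢ`.
If the lines cross `x = θ` at heights `y₁, y₂`, combining their equations there with the first
Cramer identity gives `D·(qθ − p) = q·B₁B₂·(y₁ − y₂)`, and `|D| ≥ q` turns this into
`|qθ − p| ≤ B₁B₂·|y₁ − y₂| ≤ |I|·B₁B₂`.
-/

theorem Int.dvd_of_dvd_mul_of_gcd_gcd_eq_one {D p r q : ℤ} (hp : q ∣ D * p) (hr : q ∣ D * r)
    (h : Int.gcd (Int.gcd p r) q = 1) : q ∣ D := by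
  have hDg : q ∣ (D.natAbs : ℤ) * Int.gcd p r := by
    simpa [Int.gcd_mul_left] using Int.dvd_coe_gcd hp hr
  exact Int.dvd_natAbs.1 ((Int.isCoprime_iff_gcd_eq_one.2 h).symm.dvd_of_dvd_mul_right hDg)

theorem abs_mul_sub_mul_le_two_mul_max_mul_max {A₁ B₁ A₂ B₂ : ℤ} (hB₁ : 0 ≤ B₁) (hB₂ : 0 ≤ B₂) :
    |A₁ * B₂ - A₂ * B₁| ≤ 2 * max |A₁| |A₂| * max B₁ B₂ := by
  have hA₁ : |A₁| * B₂ ≤ max |A₁| |A₂| * max B₁ B₂ :=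
    mul_le_mul (le_max_left _ _) (le_max_right _ _) hB₂ ((abs_nonneg _).trans (le_max_left _ _))
  have hA₂ : |A₂| * B₁ ≤ max |A₁| |A₂| * max B₁ B₂ :=
    mul_le_mul (le_max_right _ _) (le_max_left _ _) hB₁ ((abs_nonneg _).trans (le_max_left _ _))
  calc |A₁ * B₂ - A₂ * B₁| ≤ |A₁ * B₂| + |A₂ * B₁| := abs_sub _ _
    _ = |A₁| * B₂ + |A₂| * B₁ := by rw [abs_mul, abs_mul, abs_of_nonneg hB₁, abs_of_nonneg hB₂]
    _ ≤ 2 * max |A₁| |A₂| * max B₁ B₂ := by linarith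

section IntegerLines

variable {A₁ B₁ C₁ A₂ B₂ C₂ p r q : ℤ}

theorem dvd_det_of_intersection (hgcd : Int.gcd (Int.gcd p r) q = 1)
    (hP₁ : A₁ * p - B₁ * r + C₁ * q = 0) (hP₂ : A₂ * p - B₂ * r + C₂ * q = 0) :
    q ∣ A₁ * B₂ - A₂ * B₁ := by
  refine Int.dvd_of_dvd_mul_of_gcd_gcd_eq_one ⟨B₁ * C₂ - B₂ * C₁, ?_⟩ ⟨A₁ * C₂ - A₂ * C₁, ?_⟩ hgcd
  · linear_combination B₂ * hP₁ - B₁ * hP₂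
  · linear_combination A₂ * hP₁ - A₁ * hP₂

theorem le_abs_det_of_intersection (hnpar : A₁ * B₂ ≠ A₂ * B₁)
    (hgcd : Int.gcd (Int.gcd p r) q = 1)
    (hP₁ : A₁ * p - B₁ * r + C₁ * q = 0) (hP₂ : A₂ * p - B₂ * r + C₂ * q = 0) :
    q ≤ |A₁ * B₂ - A₂ * B₁| :=
  Int.le_of_dvd (abs_pos.2 (sub_ne_zero.2 hnpar))
    ((dvd_det_of_intersection hgcd hP₁ hP₂).trans (self_dvd_abs _))

theorem det_mul_sub_eq_of_heights {θ y₁ y₂ : ℝ}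
    (hP₁ : A₁ * p - B₁ * r + C₁ * q = 0) (hP₂ : A₂ * p - B₂ * r + C₂ * q = 0)
    (hy₁ : (A₁ : ℝ) * θ - B₁ * y₁ + C₁ = 0) (hy₂ : (A₂ : ℝ) * θ - B₂ * y₂ + C₂ = 0) :
    ((A₁ * B₂ - A₂ * B₁ : ℤ) : ℝ) * (q * θ - p) = q * (B₁ * B₂ * (y₁ - y₂)) := by
  have hP₁' : (A₁ : ℝ) * p - B₁ * r + C₁ * q = 0 := by exact_mod_cast hP₁
  have hP₂' : (A₂ : ℝ) * p - B₂ * r + C₂ * q = 0 := by exact_mod_cast hP₂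
  push_cast
  linear_combination (q : ℝ) * (B₂ * hy₁ - B₁ * hy₂) - B₂ * hP₁' + B₁ * hP₂'

theorem abs_mul_sub_le_of_heights {θ y₁ y₂ : ℝ} (hq : 0 < q) (hB₁ : 0 < B₁) (hB₂ : 0 < B₂)
    (hnpar : A₁ * B₂ ≠ A₂ * B₁) (hgcd : Int.gcd (Int.gcd p r) q = 1)
    (hP₁ : A₁ * p - B₁ * r + C₁ * q = 0) (hP₂ : A₂ * p - B₂ * r + C₂ * q = 0)
    (hy₁ : (A₁ : ℝ) * θ - B₁ * y₁ + C₁ = 0) (hy₂ : (A₂ : ℝ) * θ - B₂ * y₂ + C₂ = 0) :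
    |(q : ℝ) * θ - p| ≤ B₁ * B₂ * |y₁ - y₂| := by
  set D : ℤ := A₁ * B₂ - A₂ * B₁
  have hqD : (q : ℝ) ≤ |(D : ℝ)| := by
    exact_mod_cast le_abs_det_of_intersection hnpar hgcd hP₁ hP₂
  have hB : (0 : ℝ) ≤ B₁ * B₂ := by positivity
  have hq' : (0 : ℝ) < q := by exact_mod_cast hq
  have hD : 0 < |(D : ℝ)| := hq'.trans_le hqD
  refine le_of_mul_le_mul_left ?_ hD
  calc |(D : ℝ)| * |(q : ℝ) * θ - p| = q * (B₁ * B₂ * |y₁ - y₂|) := by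
        rw [← abs_mul, det_mul_sub_eq_of_heights hP₁ hP₂ hy₁ hy₂, abs_mul, abs_mul,
          abs_of_nonneg hB, abs_of_pos hq']
    _ ≤ |(D : ℝ)| * (B₁ * B₂ * |y₁ - y₂|) := by gcongr

end IntegerLines

theorem stmt_1_general (θ a len : ℝ)
    (A₁ B₁ C₁ A₂ B₂ C₂ : ℤ) (hB₁ : 0 < B₁) (hB₂ : 0 < B₂)
    (hnpar : A₁ * B₂ ≠ A₂ * B₁)
    (hmeet₁ : ∃ y ∈ Set.Icc a (a + len), (A₁ : ℝ) * θ - (B₁ : ℝ) * y + (C₁ : ℝ) = 0)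
    (hmeet₂ : ∃ y ∈ Set.Icc a (a + len), (A₂ : ℝ) * θ - (B₂ : ℝ) * y + (C₂ : ℝ) = 0)
    (p r q : ℤ) (hq : 0 < q) (hgcd : Int.gcd (Int.gcd p r) q = 1)
    (hP₁ : A₁ * p - B₁ * r + C₁ * q = 0)
    (hP₂ : A₂ * p - B₂ * r + C₂ * q = 0) :
    |(q : ℝ) * θ - (p : ℝ)| ≤ len * (B₁ : ℝ) * (B₂ : ℝ) ∧
      q ≤ 2 * max |A₁| |A₂| * max B₁ B₂ := by
  obtain ⟨y₁, ⟨hy₁a, hy₁b⟩, hy₁⟩ := hmeet₁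
  obtain ⟨y₂, ⟨hy₂a, hy₂b⟩, hy₂⟩ := hmeet₂
  have hy : |y₁ - y₂| ≤ len := abs_sub_le_iff.2 ⟨by linarith, by linarith⟩
  have hB : (0 : ℝ) ≤ B₁ * B₂ := by positivity
  constructor
  · calc |(q : ℝ) * θ - p| ≤ B₁ * B₂ * |y₁ - y₂| :=
          abs_mul_sub_le_of_heights hq hB₁ hB₂ hnpar hgcd hP₁ hP₂ hy₁ hy₂
      _ ≤ len * B₁ * B₂ := by nlinarith
  · exact (le_abs_det_of_intersection hnpar hgcd hP₁ hP₂).trans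
      (abs_mul_sub_mul_le_two_mul_max_mul_max hB₁.le hB₂.le)

/-- Lemma 2: if two non-parallel integer lines both meet a vertical segment of
length `len` on the line `x = θ`, and meet each other at `P = (p/q, r/q)` in
lowest terms, then `|qθ − p| ≤ len·B₁·B₂` and `q ≤ 2·max(|A₁|,|A₂|)·max(B₁,B₂)`. -/
theorem stmt_1 (θ a len : ℝ) (hlen : 0 ≤ len)
    (A₁ B₁ C₁ A₂ B₂ C₂ : ℤ) (hB₁ : 0 < B₁) (hB₂ : 0 < B₂)
    (hnpar : A₁ * B₂ ≠ A₂ * B₁)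
    (hmeet₁ : ∃ y ∈ Set.Icc a (a + len), (A₁ : ℝ) * θ - (B₁ : ℝ) * y + (C₁ : ℝ) = 0)
    (hmeet₂ : ∃ y ∈ Set.Icc a (a + len), (A₂ : ℝ) * θ - (B₂ : ℝ) * y + (C₂ : ℝ) = 0)
    (p r q : ℤ) (hq : 0 < q) (hgcd : Int.gcd (Int.gcd p r) q = 1)
    (hP₁ : A₁ * p - B₁ * r + C₁ * q = 0)
    (hP₂ : A₂ * p - B₂ * r + C₂ * q = 0) :
    |(q : ℝ) * θ - (p : ℝ)| ≤ len * (B₁ : ℝ) * (B₂ : ℝ) ∧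
      q ≤ 2 * max |A₁| |A₂| * max B₁ B₂ :=
  stmt_1_general θ a len A₁ B₁ C₁ A₂ B₂ C₂ hB₁ hB₂ hnpar hmeet₁ hmeet₂ p r q hq hgcd hP₁ hP₂
end

section
/- Let σ, W > 0 and suppose real numbers A, B satisfy 0 < B ≤ σ, A² ≤ σB, and B·max(A², B²) ≥ W. Then |A|/B ≤ (σ³/W)^(1/4). -/
/-!
Both constraints bound `A⁴ W` by `σ³ B⁴`: if `W ≤ A² B` then `A⁴ W ≤ (A²)³ B ≤ (σ B)³ B`, and if
`W ≤ B³` then `A⁴ W ≤ (σ B)² B³ ≤ σ³ B⁴` because `B ≤ σ`. Taking fourth roots gives the bound on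
`|A| / B`, with equality at the corner where `A² = σ B` and `A² B = W`.
-/

lemma pow_four_mul_le_of_le_mul_sq {σ W A B : ℝ} (hB : 0 ≤ B) (hA : A ^ 2 ≤ σ * B)
    (hW : W ≤ B * A ^ 2) : A ^ 4 * W ≤ σ ^ 3 * B ^ 4 :=
  calc A ^ 4 * W ≤ A ^ 4 * (B * A ^ 2) := by gcongr
    _ = (A ^ 2) ^ 3 * B := by ring
    _ ≤ (σ * B) ^ 3 * B := by gcongr
    _ = σ ^ 3 * B ^ 4 := by ring

lemma pow_four_mul_le_of_le_pow_three {σ W A B : ℝ} (hB : 0 ≤ B) (hBσ : B ≤ σ)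
    (hA : A ^ 2 ≤ σ * B) (hW : W ≤ B * B ^ 2) : A ^ 4 * W ≤ σ ^ 3 * B ^ 4 :=
  calc A ^ 4 * W ≤ A ^ 4 * (B * B ^ 2) := by gcongr
    _ = (A ^ 2) ^ 2 * B ^ 3 := by ring
    _ ≤ (σ * B) ^ 2 * B ^ 3 := by gcongr
    _ = σ ^ 2 * B ^ 4 * B := by ring
    _ ≤ σ ^ 2 * B ^ 4 * σ := by gcongr
    _ = σ ^ 3 * B ^ 4 := by ring

lemma pow_four_mul_le_of_le_mul_max {σ W A B : ℝ} (hB : 0 ≤ B) (hBσ : B ≤ σ)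
    (hA : A ^ 2 ≤ σ * B) (hW : W ≤ B * max (A ^ 2) (B ^ 2)) : A ^ 4 * W ≤ σ ^ 3 * B ^ 4 := by
  rcases max_cases (A ^ 2) (B ^ 2) with ⟨hmax, -⟩ | ⟨hmax, -⟩ <;> rw [hmax] at hW
  · exact pow_four_mul_le_of_le_mul_sq hB hA hW
  · exact pow_four_mul_le_of_le_pow_three hB hBσ hA hW

theorem stmt_2_general (σ W A B : ℝ) (hW : 0 < W)
    (hB0 : 0 < B) (hBσ : B ≤ σ) (hA : A ^ 2 ≤ σ * B)
    (hH : W ≤ B * max (A ^ 2) (B ^ 2)) :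
    |A| / B ≤ (σ ^ 3 / W) ^ ((1 : ℝ) / 4) := by
  have hσ : 0 < σ := hB0.trans_le hBσ
  have hpow : (|A| / B) ^ 4 ≤ σ ^ 3 / W := by
    rw [div_pow, (by decide : Even 4).pow_abs, div_le_div_iff₀ (by positivity) hW]
    exact pow_four_mul_le_of_le_mul_max hB0.le hBσ hA hH
  rw [one_div, Real.le_rpow_inv_iff_of_pos (by positivity) (by positivity) (by norm_num)]
  exact_mod_cast hpow

/-- Lemma 5: if `0 < B ≤ σ`, `A² ≤ σB` and `B·max(A²,B²) ≥ W`, then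
`|A|/B ≤ (σ³/W)^(1/4)`. -/
theorem stmt_2 (σ W A B : ℝ) (hσ : 0 < σ) (hW : 0 < W)
    (hB0 : 0 < B) (hBσ : B ≤ σ) (hA : A ^ 2 ≤ σ * B)
    (hH : W ≤ B * max (A ^ 2) (B ^ 2)) :
    |A| / B ≤ (σ ^ 3 / W) ^ ((1 : ℝ) / 4) :=
  stmt_2_general σ W A B hW hB0 hBσ hA hH
end

section
/- Let θ be real, R ≥ 2^422 an integer, λ = 1741/330, 0 < κ ≤ (1/3)·R^(−λ/2), n ≥ 1. Let J ⊂ {θ}×ℝ be a vertical segment of length κ/R^n. Then all integer lines L(A,B,C) (B > 0, gcd(A,B,C) = 1) intersecting J with H(A,B) = B·max(A²,B²) < R^n and B > R^(n/3 − λ) pass through a single common point. -/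
/-!
Encode the line `A x - B y + C = 0` as the vector `(A, -B, C)`. Two non-parallel lines meet at
the point represented by their cross product, which lies on a third line iff the determinant of
the three vanishes; so it suffices that every such determinant vanishes and that parallel lines
coincide (a `2 × 2` minor vanishes). Both are integers, so it is enough to bound them by `1`.
If the lines pass through `(θ, tᵢ)`, eliminating `C` shows that the determinant is, up to sign,
`Σ A₃ B₁ B₂ (t₁ - t₂)` over cyclic permutations. The height conditions give `B < R^(n/3)` and
`|A| < R^(n/3 + λ/2)`, so the determinant is less than `3 R^(n + λ/2) κ / R^n ≤ 1` in absolute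
value; the minor of two parallel lines is `B₁ B₂ (t₁ - t₂)`, of size less than `κ ≤ 1`.
-/

open Real Matrix Set

theorem exists_common_point_of_det_eq_zero {K : Type*} [Field K] (S : Set (Fin 3 → K))
    (hS : ∀ u ∈ S, u 1 ≠ 0)
    (hdet : ∀ u ∈ S, ∀ v ∈ S, ∀ w ∈ S, det ![u, v, w] = 0)
    (hpar : ∀ u ∈ S, ∀ v ∈ S, (u ⨯₃ v) 2 = 0 → (u ⨯₃ v) 0 = 0) :
    ∃ x y : K, ∀ u ∈ S, u ⬝ᵥ ![x, y, 1] = 0 := by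
  by_cases hcross : ∃ v ∈ S, ∃ w ∈ S, (v ⨯₃ w) 2 ≠ 0
  · obtain ⟨v, hv, w, hw, hvw⟩ := hcross
    set p := ((v ⨯₃ w) 2)⁻¹ • v ⨯₃ w
    refine ⟨p 0, p 1, fun u hu => ?_⟩
    have hp : ![p 0, p 1, 1] = p := by
      ext i; fin_cases i <;> simp [p, hvw]
    rw [hp, dotProduct_smul, triple_product_eq_det, hdet u hu v hv w hw, smul_zero]
  · push Not at hcross
    rcases S.eq_empty_or_nonempty with rfl | ⟨w, hw⟩
    · simp
    refine ⟨0, -w 2 / w 1, fun u hu => ?_⟩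
    have h0 := hpar u hu w hw (hcross u hu w hw)
    rw [cross_apply] at h0
    simp only [vec3_dotProduct, Matrix.cons_val] at h0 ⊢
    field_simp [hS w hw]
    linear_combination -h0

theorem Int.cast_det_vec3 (u v w : Fin 3 → ℤ) :
    ((det ![u, v, w] : ℤ) : ℝ) = det ![Int.cast ∘ u, Int.cast ∘ v, Int.cast ∘ w] := by
  rw [← triple_product_eq_det, ← triple_product_eq_det]
  simp only [cross_apply, vec3_dotProduct, Matrix.cons_val, Function.comp_apply]
  push_cast
  ring

theorem Int.cast_cross_apply (u v : Fin 3 → ℤ) (i : Fin 3) :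
    (((u ⨯₃ v) i : ℤ) : ℝ) = ((Int.cast ∘ u) ⨯₃ (Int.cast ∘ v)) i := by
  fin_cases i <;> simp [cross_apply]

theorem Int.eq_zero_of_abs_cast_lt_one {N : ℤ} (h : |(N : ℝ)| < 1) : N = 0 :=
  Int.abs_lt_one_iff.mp (by exact_mod_cast h)

lemma abs_mul_mul_mul_lt {X Y δ b c d e : ℝ} (hb : |b| < X) (hc : |c| < Y) (hd : |d| < Y)
    (he : |e| ≤ δ) (hδ : 0 < δ) : |b * c * d * e| < X * Y ^ 2 * δ := by
  rw [abs_mul, abs_mul, abs_mul, sq, ← mul_assoc]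
  calc |b| * |c| * |d| * |e| ≤ |b| * |c| * |d| * δ := by gcongr
    _ < X * Y * Y * δ := by gcongr

lemma abs_sub_le_of_mem_Icc {a δ s t : ℝ} (hs : s ∈ Icc a (a + δ)) (ht : t ∈ Icc a (a + δ)) :
    |s - t| ≤ δ := by
  simpa [Real.dist_eq] using Real.dist_le_of_mem_Icc hs ht

/-- `u` encodes the line `u 0 * x + u 1 * y + u 2 = 0`. -/
def BoundedLineMeetsSegment (X Y θ a δ : ℝ) (u : Fin 3 → ℝ) : Prop :=
  |u 0| < X ∧ |u 1| < Y ∧ ∃ t ∈ Icc a (a + δ), u ⬝ᵥ ![θ, t, 1] = 0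

namespace BoundedLineMeetsSegment

variable {X Y θ a δ : ℝ}

lemma abs_det_lt (hδ : 0 < δ) {u v w : Fin 3 → ℝ} (hu : BoundedLineMeetsSegment X Y θ a δ u)
    (hv : BoundedLineMeetsSegment X Y θ a δ v) (hw : BoundedLineMeetsSegment X Y θ a δ w) :
    |det ![u, v, w]| < 3 * X * Y ^ 2 * δ := by
  obtain ⟨hu0, hu1, s, hs, hus⟩ := hu
  obtain ⟨hv0, hv1, t, ht, hvt⟩ := hv
  obtain ⟨hw0, hw1, r, hr, hwr⟩ := hw
  simp only [vec3_dotProduct, Matrix.cons_val] at hus hvt hwr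
  have hdet : det ![u, v, w] = u 0 * v 1 * w 1 * (t - r) + v 0 * w 1 * u 1 * (r - s)
      + w 0 * u 1 * v 1 * (s - t) := by
    rw [← triple_product_eq_det, cross_apply, vec3_dotProduct]
    simp only [Matrix.cons_val]
    linear_combination (v 0 * w 1 - v 1 * w 0) * hus + (w 0 * u 1 - w 1 * u 0) * hvt
      + (u 0 * v 1 - u 1 * v 0) * hwr
  rw [hdet]
  have h₁ := abs_mul_mul_mul_lt hu0 hv1 hw1 (abs_sub_le_of_mem_Icc ht hr) hδ
  have h₂ := abs_mul_mul_mul_lt hv0 hw1 hu1 (abs_sub_le_of_mem_Icc hr hs) hδ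
  have h₃ := abs_mul_mul_mul_lt hw0 hu1 hv1 (abs_sub_le_of_mem_Icc hs ht) hδ
  linarith [abs_add_three (u 0 * v 1 * w 1 * (t - r)) (v 0 * w 1 * u 1 * (r - s))
    (w 0 * u 1 * v 1 * (s - t))]

lemma abs_cross_zero_lt (hδ : 0 < δ) {u v : Fin 3 → ℝ} (hu : BoundedLineMeetsSegment X Y θ a δ u)
    (hv : BoundedLineMeetsSegment X Y θ a δ v) (hpar : (u ⨯₃ v) 2 = 0) :
    |(u ⨯₃ v) 0| < Y ^ 2 * δ := by
  obtain ⟨-, hu1, s, hs, hus⟩ := hu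
  obtain ⟨-, hv1, t, ht, hvt⟩ := hv
  simp only [cross_apply, vec3_dotProduct, Matrix.cons_val] at hpar hus hvt ⊢
  have hcross : u 1 * v 2 - u 2 * v 1 = u 1 * v 1 * (s - t) := by
    linear_combination u 1 * hvt - v 1 * hus + θ * hpar
  rw [hcross, abs_mul, abs_mul, sq]
  calc |u 1| * |v 1| * |s - t| ≤ |u 1| * |v 1| * δ := by
        gcongr; exact abs_sub_le_of_mem_Icc hs ht
    _ < Y * Y * δ := by gcongr

theorem exists_common_point_of_int (S : Set (Fin 3 → ℤ)) (hδ : 0 < δ)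
    (hdetδ : 3 * X * Y ^ 2 * δ ≤ 1) (hparδ : Y ^ 2 * δ ≤ 1)
    (hS : ∀ u ∈ S, u 1 ≠ 0 ∧ BoundedLineMeetsSegment X Y θ a δ (Int.cast ∘ u)) :
    ∃ x y : ℝ, ∀ u ∈ S, (Int.cast ∘ u : Fin 3 → ℝ) ⬝ᵥ ![x, y, 1] = 0 := by
  let cast : (Fin 3 → ℤ) → Fin 3 → ℝ := (Int.cast ∘ ·)
  have hB : ∀ u ∈ cast '' S, u 1 ≠ 0 := by
    rintro _ ⟨u, hu, rfl⟩
    simpa [cast] using (hS u hu).1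
  have hdet : ∀ u ∈ cast '' S, ∀ v ∈ cast '' S, ∀ w ∈ cast '' S, det ![u, v, w] = 0 := by
    rintro _ ⟨u, hu, rfl⟩ _ ⟨v, hv, rfl⟩ _ ⟨w, hw, rfl⟩
    have hlt := abs_det_lt hδ (hS u hu).2 (hS v hv).2 (hS w hw).2
    rw [← Int.cast_det_vec3] at hlt ⊢
    rw [Int.eq_zero_of_abs_cast_lt_one (hlt.trans_le hdetδ), Int.cast_zero]
  have hpar : ∀ u ∈ cast '' S, ∀ v ∈ cast '' S, (u ⨯₃ v) 2 = 0 → (u ⨯₃ v) 0 = 0 := by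
    rintro _ ⟨u, hu, rfl⟩ _ ⟨v, hv, rfl⟩ huv
    have hlt := abs_cross_zero_lt hδ (hS u hu).2 (hS v hv).2 huv
    rw [← Int.cast_cross_apply] at hlt ⊢
    rw [Int.eq_zero_of_abs_cast_lt_one (hlt.trans_le hparδ), Int.cast_zero]
  obtain ⟨x, y, h⟩ := exists_common_point_of_det_eq_zero _ hB hdet hpar
  exact ⟨x, y, fun u hu => h _ (mem_image_of_mem _ hu)⟩

end BoundedLineMeetsSegment

lemma lt_rpow_div_three_of_mul_max_lt {R ν B M : ℝ} (hR : 0 < R) (hB : 0 ≤ B)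
    (h : B * max M (B ^ 2) < R ^ ν) : B < R ^ (ν / 3) := by
  refine lt_of_pow_lt_pow_left₀ 3 (rpow_nonneg hR.le _) ?_
  rw [← rpow_natCast (R ^ (ν / 3)), ← rpow_mul hR.le]
  calc B ^ 3 = B * B ^ 2 := by ring
    _ ≤ B * max M (B ^ 2) := by gcongr; exact le_max_right _ _
    _ < R ^ (ν / 3 * (3 : ℕ)) := by norm_num [h]

lemma abs_lt_rpow_of_mul_max_lt {R ν lam A B N : ℝ} (hR : 0 < R) (h : B * max (A ^ 2) N < R ^ ν)
    (hB : R ^ (ν / 3 - lam) < B) : |A| < R ^ (ν / 3 + lam / 2) := by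
  refine abs_lt_of_sq_lt_sq ?_ (rpow_nonneg hR.le _)
  have hpow : (R ^ (ν / 3 + lam / 2)) ^ 2 * R ^ (ν / 3 - lam) = R ^ ν := by
    rw [← rpow_natCast (R ^ _), ← rpow_mul hR.le, ← rpow_add hR]
    ring_nf
  refine lt_of_mul_lt_mul_right ?_ (rpow_nonneg hR.le (ν / 3 - lam))
  calc A ^ 2 * R ^ (ν / 3 - lam) ≤ A ^ 2 * B := by gcongr
    _ ≤ B * max (A ^ 2) N := by
        rw [mul_comm]; gcongr
        · exact (rpow_pos_of_pos hR _).le.trans hB.le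
        · exact le_max_left _ _
    _ < _ := hpow ▸ h

lemma three_mul_rpow_mul_sq_mul_div_le_one {R ν lam κ : ℝ} (hR : 0 < R)
    (hκ : κ ≤ 1 / 3 * R ^ (-(lam / 2))) :
    3 * R ^ (ν / 3 + lam / 2) * (R ^ (ν / 3)) ^ 2 * (κ / R ^ ν) ≤ 1 := by
  have hpow : R ^ (ν / 3 + lam / 2) * (R ^ (ν / 3)) ^ 2 = R ^ ν * R ^ (lam / 2) := by
    rw [← rpow_natCast (R ^ _), ← rpow_mul hR.le, ← rpow_add hR, ← rpow_add hR]
    ring_nf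
  calc 3 * R ^ (ν / 3 + lam / 2) * (R ^ (ν / 3)) ^ 2 * (κ / R ^ ν)
        = 3 * κ * R ^ (lam / 2) := by
          rw [mul_assoc 3, hpow]; field_simp [(rpow_pos_of_pos hR ν).ne']
    _ ≤ R ^ (-(lam / 2)) * R ^ (lam / 2) := by gcongr; linarith
    _ = 1 := by rw [← rpow_add hR, neg_add_cancel, rpow_zero]

lemma rpow_div_three_sq_mul_div_le_one {R ν lam κ : ℝ} (hR : 1 ≤ R) (hν : 0 ≤ ν) (hlam : 0 ≤ lam)
    (hκ0 : 0 ≤ κ) (hκ : κ ≤ 1 / 3 * R ^ (-(lam / 2))) :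
    (R ^ (ν / 3)) ^ 2 * (κ / R ^ ν) ≤ 1 := by
  have hR0 : 0 < R := zero_lt_one.trans_le hR
  have hsq : (R ^ (ν / 3)) ^ 2 ≤ R ^ ν := by
    rw [← rpow_natCast (R ^ _), ← rpow_mul hR0.le]
    exact rpow_le_rpow_of_exponent_le hR (by push_cast; linarith)
  have hκ1 : κ ≤ 1 := by
    linarith [rpow_le_one_of_one_le_of_nonpos hR (by linarith : -(lam / 2) ≤ 0)]
  calc (R ^ (ν / 3)) ^ 2 * (κ / R ^ ν) ≤ R ^ ν * (κ / R ^ ν) := by gcongr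
    _ = κ := by field_simp [(rpow_pos_of_pos hR0 ν).ne']
    _ ≤ 1 := hκ1

lemma intCast_vec3_dotProduct (A B C : ℤ) (x y : ℝ) :
    (Int.cast ∘ ![A, -B, C] : Fin 3 → ℝ) ⬝ᵥ ![x, y, 1] = A * x - B * y + C := by
  simp only [vec3_dotProduct, Function.comp_apply, Matrix.cons_val]
  push_cast
  ring

theorem stmt_3_general (θ : ℝ) (R n : ℕ) (hR : 2 ^ 422 ≤ R)
    (lam κ : ℝ) (hlam : lam = 1741 / 330)
    (hκ0 : 0 < κ) (hκ : κ ≤ (1 / 3) * (R : ℝ) ^ (-(lam / 2)))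
    (a : ℝ) :
    ∃ x y : ℝ, ∀ A B C : ℤ, 0 < B → Int.gcd (Int.gcd A B) C = 1 →
      (∃ t ∈ Set.Icc a (a + κ / (R : ℝ) ^ n),
        (A : ℝ) * θ - (B : ℝ) * t + (C : ℝ) = 0) →
      ((B * max (A ^ 2) (B ^ 2) : ℤ) : ℝ) < (R : ℝ) ^ n →
      (B : ℝ) > (R : ℝ) ^ ((n : ℝ) / 3 - lam) →
      (A : ℝ) * x - (B : ℝ) * y + (C : ℝ) = 0 := by
  have hR1 : (1 : ℝ) ≤ R := by exact_mod_cast Nat.one_le_two_pow.trans hR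
  have hR0 : (0 : ℝ) < R := zero_lt_one.trans_le hR1
  have hlam0 : 0 ≤ lam := by rw [hlam]; norm_num
  simp only [← rpow_natCast (R : ℝ) n]
  set S : Set (Fin 3 → ℤ) := {u | ∃ A B C : ℤ, u = ![A, -B, C] ∧ 0 < B ∧
    (∃ t ∈ Icc a (a + κ / (R : ℝ) ^ (n : ℝ)), (A : ℝ) * θ - (B : ℝ) * t + (C : ℝ) = 0) ∧
    ((B * max (A ^ 2) (B ^ 2) : ℤ) : ℝ) < (R : ℝ) ^ (n : ℝ) ∧
    (B : ℝ) > (R : ℝ) ^ ((n : ℝ) / 3 - lam)}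
  have hS : ∀ u ∈ S, u 1 ≠ 0 ∧ BoundedLineMeetsSegment ((R : ℝ) ^ ((n : ℝ) / 3 + lam / 2))
      ((R : ℝ) ^ ((n : ℝ) / 3)) θ a (κ / (R : ℝ) ^ (n : ℝ)) (Int.cast ∘ u) := by
    rintro _ ⟨A, B, C, rfl, hB, ⟨t, ht, hline⟩, hH, hBl⟩
    have hBR : (0 : ℝ) < B := Int.cast_pos.mpr hB
    push_cast at hH
    refine ⟨by simpa using hB.ne', abs_lt_rpow_of_mul_max_lt hR0 hH hBl, ?_, t, ht, ?_⟩
    · simpa [abs_of_pos hBR] using lt_rpow_div_three_of_mul_max_lt hR0 hBR.le hH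
    · rwa [intCast_vec3_dotProduct]
  obtain ⟨x, y, hxy⟩ := BoundedLineMeetsSegment.exists_common_point_of_int S (by positivity)
    (three_mul_rpow_mul_sq_mul_div_le_one hR0 hκ)
    (rpow_div_three_sq_mul_div_le_one hR1 n.cast_nonneg hlam0 hκ0.le hκ) hS
  refine ⟨x, y, fun A B C hB _ ht hH hBl => ?_⟩
  simpa only [intCast_vec3_dotProduct] using hxy _ ⟨A, B, C, rfl, hB, ht, hH, hBl⟩

/-- Lemma 3: all integer lines of height `< R^n` with `B > R^(n/3 − λ)`
intersecting a vertical segment of length `κ/R^n` on `x = θ` pass through a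
single common point. -/
theorem stmt_3 (θ : ℝ) (R n : ℕ) (hR : 2 ^ 422 ≤ R) (hn : 1 ≤ n)
    (lam κ : ℝ) (hlam : lam = 1741 / 330)
    (hκ0 : 0 < κ) (hκ : κ ≤ (1 / 3) * (R : ℝ) ^ (-(lam / 2)))
    (a : ℝ) :
    ∃ x y : ℝ, ∀ A B C : ℤ, 0 < B → Int.gcd (Int.gcd A B) C = 1 →
      (∃ t ∈ Set.Icc a (a + κ / (R : ℝ) ^ n),
        (A : ℝ) * θ - (B : ℝ) * t + (C : ℝ) = 0) →
      ((B * max (A ^ 2) (B ^ 2) : ℤ) : ℝ) < (R : ℝ) ^ n →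
      (B : ℝ) > (R : ℝ) ^ ((n : ℝ) / 3 - lam) →
      (A : ℝ) * x - (B : ℝ) * y + (C : ℝ) = 0 :=
  stmt_3_general θ R n hR lam κ hlam hκ0 hκ a
end

section
/- Suppose p, r, q are integers with q > 0 and gcd(p,r,q) = 1. Then there exist integers A, B, C with (A,B) ≠ (0,0), A·p − B·r + C·q = 0, max(|A|, B) ≤ √q, and B ≥ 0. -/
/-! With `n = ⌊√q⌋` there are `(n + 1)² > q` pairs `(a, b) ∈ [0, n]²`, so two of them give the
same residue of `a p - b r` modulo `q`; their difference is the required `(A, B)`, and `C` is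
read off from the divisibility. -/

theorem exists_dvd_sub_mul_of_lt_sq (p r : ℤ) {q n : ℤ} (hq : 0 < q) (hn : 0 ≤ n)
    (hqn : q < (n + 1) ^ 2) :
    ∃ A B : ℤ, (A, B) ≠ (0, 0) ∧ |A| ≤ n ∧ 0 ≤ B ∧ B ≤ n ∧ q ∣ A * p - B * r := by
  set box := Finset.Icc 0 n ×ˢ Finset.Icc 0 n
  have hcard : (Finset.Ico 0 q).card < box.card := by
    simp only [box, Finset.card_product, Int.card_Icc, Int.card_Ico, sub_zero]
    rw [← Int.ofNat_lt, Int.natCast_mul, Int.toNat_of_nonneg hq.le, Int.toNat_of_nonneg (by omega)]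
    linarith
  have hmaps : Set.MapsTo (fun x : ℤ × ℤ => (x.1 * p - x.2 * r) % q) box (Finset.Ico 0 q) :=
    fun x _ => Finset.mem_Ico.mpr ⟨Int.emod_nonneg _ hq.ne', Int.emod_lt_of_pos _ hq⟩
  obtain ⟨x, hx, y, hy, hxy, hmod⟩ := Finset.exists_ne_map_eq_of_card_lt_of_maps_to hcard hmaps
  -- swapping `x` and `y` negates `(A, B)`
  wlog hle : y.2 ≤ x.2 generalizing x y
  · exact this y hy x hx hxy.symm hmod.symm (by omega)
  simp only [box, Finset.mem_product, Finset.mem_Icc] at hx hy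
  refine ⟨x.1 - y.1, x.2 - y.2, ?_, abs_le.mpr ⟨by omega, by omega⟩, by omega, by omega, ?_⟩
  · intro h
    simp only [Prod.mk.injEq, sub_eq_zero] at h
    exact hxy (Prod.ext h.1 h.2)
  · convert (Int.ModEq.dvd hmod.symm) using 1
    ring

theorem stmt_10_general (p r q : ℤ) (hq : 0 < q) :
    ∃ A B C : ℤ, (A, B) ≠ (0, 0) ∧ A * p - B * r + C * q = 0 ∧
      ((max |A| B : ℤ) : ℝ) ≤ Real.sqrt (q : ℝ) ∧ 0 ≤ B := by
  set n := ⌊Real.sqrt q⌋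
  have hn : 0 ≤ n := Int.floor_nonneg.mpr (Real.sqrt_nonneg _)
  have hqn : q < (n + 1) ^ 2 := by
    have hlt := Int.lt_floor_add_one (Real.sqrt q)
    have hsq : (q : ℝ) < ((n + 1 : ℤ) : ℝ) ^ 2 := by
      rw [← Real.sq_sqrt (Int.cast_nonneg hq.le : (0 : ℝ) ≤ q)]
      push_cast
      gcongr
    exact_mod_cast hsq
  obtain ⟨A, B, hne, hA, hB, hBn, k, hk⟩ := exists_dvd_sub_mul_of_lt_sq p r hq hn hqn
  refine ⟨A, B, -k, hne, by rw [hk]; ring, ?_, hB⟩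
  calc ((max |A| B : ℤ) : ℝ) ≤ n := by exact_mod_cast max_le hA hBn
    _ ≤ Real.sqrt q := Int.floor_le _

/-- Pigeonhole step of Lemma 9: if `gcd(p,r,q) = 1`, `q > 0`, then there are
integers `A, B, C` with `(A,B) ≠ (0,0)`, `Ap − Br + Cq = 0`, `max(|A|,B) ≤ √q`
and `B ≥ 0`. -/
theorem stmt_10 (p r q : ℤ) (hq : 0 < q) (hgcd : Int.gcd (Int.gcd p r) q = 1) :
    ∃ A B C : ℤ, (A, B) ≠ (0, 0) ∧ A * p - B * r + C * q = 0 ∧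
      ((max |A| B : ℤ) : ℝ) ≤ Real.sqrt (q : ℝ) ∧ 0 ≤ B :=
  stmt_10_general p r q hq
end

section
/- Let θ be real, R ≥ 2^422, λ = 1741/330, κ ≤ (1/3)R^(−λ/2), integers n ≥ 1 and 1 ≤ l ≤ n/(3λ). All integer lines L(A,B,C) (B > 0) intersecting a vertical segment J of length κ/R^(n−l) on x = θ with H(A,B) < R^n and R^(n/3 − λ(l+1)) ≤ B ≤ R^(n/3 − λl) pass through a single common point. -/
/-!
Each line in question has `0 < B ≤ R^(n/3 − λl)` and, since `B·A² < Rⁿ` and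
`B ≥ R^(n/3 − λ(l+1))`, also `|A| < R^(n/3 + λ(l+1)/2)`; it meets the
vertical segment `{θ} × [a, a + δ]`, `δ = κ/R^(n−l)`, at some height `tᵢ`. Substituting
`Cᵢ = Bᵢtᵢ − Aᵢθ`, the determinant of three such lines becomes `Σ ± Bᵢ(tᵢ − a)·(2×2 minor of A, B)`,
so it is an integer of absolute value at most `6δ·max|A|·(max B)² ≤ 2R^(l(1 − 3λ/2)) < 1`,
hence zero. Likewise two parallel lines have `B₁C₂ − B₂C₁ = B₁B₂(t₂ − t₁)`, of absolute value
`< 1`, so they coincide. Thus either all lines coincide, or two of them cross and every other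
line passes through their intersection.
-/

/-- The line `A x − B y + C = 0`, with `|A| ≤ α` and `0 ≤ B ≤ β`, meets the vertical segment
`{θ} × [a, a + δ]`. -/
structure BoundedLineMeetsSegment_s14 (θ a δ α β A B C : ℝ) : Prop where
  abs_A_le : |A| ≤ α
  B_nonneg : 0 ≤ B
  B_le : B ≤ β
  meets : ∃ t ∈ Set.Icc a (a + δ), A * θ - B * t + C = 0

namespace BoundedLineMeetsSegment_s14

variable {θ a δ α β A₁ B₁ C₁ A₂ B₂ C₂ A₃ B₃ C₃ : ℝ}

theorem abs_mul_le (h₁ : BoundedLineMeetsSegment_s14 θ a δ α β A₁ B₁ C₁)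
    (h₂ : BoundedLineMeetsSegment_s14 θ a δ α β A₂ B₂ C₂) : |A₁ * B₂| ≤ α * β := by
  rw [abs_mul, abs_of_nonneg h₂.B_nonneg]
  exact mul_le_mul h₁.abs_A_le h₂.B_le h₂.B_nonneg ((abs_nonneg _).trans h₁.abs_A_le)

theorem abs_cross_le (h₁ : BoundedLineMeetsSegment_s14 θ a δ α β A₁ B₁ C₁)
    (h₂ : BoundedLineMeetsSegment_s14 θ a δ α β A₂ B₂ C₂) : |A₁ * B₂ - A₂ * B₁| ≤ 2 * α * β := by
  linarith [abs_sub (A₁ * B₂) (A₂ * B₁), h₁.abs_mul_le h₂, h₂.abs_mul_le h₁]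

theorem abs_det_le (h₁ : BoundedLineMeetsSegment_s14 θ a δ α β A₁ B₁ C₁)
    (h₂ : BoundedLineMeetsSegment_s14 θ a δ α β A₂ B₂ C₂)
    (h₃ : BoundedLineMeetsSegment_s14 θ a δ α β A₃ B₃ C₃) :
    |A₁ * (B₂ * C₃ - B₃ * C₂) - B₁ * (A₂ * C₃ - A₃ * C₂) + C₁ * (A₂ * B₃ - A₃ * B₂)|
      ≤ 6 * δ * α * β ^ 2 := by
  obtain ⟨t₁, ht₁, he₁⟩ := h₁.meets
  obtain ⟨t₂, ht₂, he₂⟩ := h₂.meets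
  obtain ⟨t₃, ht₃, he₃⟩ := h₃.meets
  have term_le : ∀ {A B C t M : ℝ}, BoundedLineMeetsSegment_s14 θ a δ α β A B C →
      t ∈ Set.Icc a (a + δ) → |M| ≤ 2 * α * β → |B * (t - a) * M| ≤ 2 * δ * α * β ^ 2 := by
    intro A B C t M h ht hM
    have hβ : 0 ≤ β := h.B_nonneg.trans h.B_le
    have hta : 0 ≤ t - a := sub_nonneg.2 ht.1
    have htδ : t - a ≤ δ := by linarith [ht.2]
    rw [abs_mul, abs_mul, abs_of_nonneg h.B_nonneg, abs_of_nonneg hta]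
    calc B * (t - a) * |M| ≤ β * δ * (2 * α * β) :=
          mul_le_mul (mul_le_mul h.B_le htδ hta hβ) hM (abs_nonneg M)
            (mul_nonneg hβ (hta.trans htδ))
      _ = 2 * δ * α * β ^ 2 := by ring
  have hΔ : A₁ * (B₂ * C₃ - B₃ * C₂) - B₁ * (A₂ * C₃ - A₃ * C₂) + C₁ * (A₂ * B₃ - A₃ * B₂)
      = B₁ * (t₁ - a) * (A₂ * B₃ - A₃ * B₂) + B₂ * (t₂ - a) * (A₃ * B₁ - A₁ * B₃)
        + B₃ * (t₃ - a) * (A₁ * B₂ - A₂ * B₁) := by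
    linear_combination (A₂ * B₃ - A₃ * B₂) * he₁ + (A₃ * B₁ - A₁ * B₃) * he₂
      + (A₁ * B₂ - A₂ * B₁) * he₃
  rw [hΔ]
  linarith [abs_add_three (B₁ * (t₁ - a) * (A₂ * B₃ - A₃ * B₂))
    (B₂ * (t₂ - a) * (A₃ * B₁ - A₁ * B₃)) (B₃ * (t₃ - a) * (A₁ * B₂ - A₂ * B₁)),
    term_le h₁ ht₁ (h₂.abs_cross_le h₃), term_le h₂ ht₂ (h₃.abs_cross_le h₁),
    term_le h₃ ht₃ (h₁.abs_cross_le h₂)]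

theorem abs_mul_sub_mul_le_of_parallel (h₁ : BoundedLineMeetsSegment_s14 θ a δ α β A₁ B₁ C₁)
    (h₂ : BoundedLineMeetsSegment_s14 θ a δ α β A₂ B₂ C₂) (hpar : A₁ * B₂ = A₂ * B₁) :
    |B₁ * C₂ - B₂ * C₁| ≤ δ * β ^ 2 := by
  obtain ⟨t₁, ht₁, he₁⟩ := h₁.meets
  obtain ⟨t₂, ht₂, he₂⟩ := h₂.meets
  have hdiff : B₁ * C₂ - B₂ * C₁ = B₁ * B₂ * (t₂ - t₁) := by
    linear_combination B₁ * he₂ - B₂ * he₁ + θ * hpar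
  have ht : |t₂ - t₁| ≤ δ := abs_le.2 ⟨by linarith [ht₁.2, ht₂.1], by linarith [ht₁.1, ht₂.2]⟩
  rw [hdiff, abs_mul, abs_mul, abs_of_nonneg h₁.B_nonneg, abs_of_nonneg h₂.B_nonneg]
  have hβ : 0 ≤ β := h₁.B_nonneg.trans h₁.B_le
  calc B₁ * B₂ * |t₂ - t₁| ≤ β * β * δ :=
        mul_le_mul (mul_le_mul h₁.B_le h₂.B_le h₂.B_nonneg hβ) ht (abs_nonneg _)
          (mul_nonneg hβ hβ)
    _ = δ * β ^ 2 := by ring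

end BoundedLineMeetsSegment_s14

theorem Int.eq_zero_of_abs_cast_le_of_lt_one {z : ℤ} {b : ℝ} (hz : |(z : ℝ)| ≤ b) (hb : b < 1) :
    z = 0 := by
  rw [← Int.abs_lt_one_iff, ← Int.cast_lt (R := ℝ), Int.cast_abs, Int.cast_one]
  exact hz.trans_lt hb

theorem line_eq_zero_of_det_eq_zero {A B C A₁ B₁ C₁ A₂ B₂ C₂ : ℝ}
    (hD : A₁ * B₂ - A₂ * B₁ ≠ 0)
    (hdet : A * (B₁ * C₂ - B₂ * C₁) - B * (A₁ * C₂ - A₂ * C₁) + C * (A₁ * B₂ - A₂ * B₁) = 0) :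
    A * ((B₁ * C₂ - B₂ * C₁) / (A₁ * B₂ - A₂ * B₁))
      - B * ((A₁ * C₂ - A₂ * C₁) / (A₁ * B₂ - A₂ * B₁)) + C = 0 := by
  linear_combination (A₁ * B₂ - A₂ * B₁)⁻¹ * hdet - C * mul_inv_cancel₀ hD

theorem line_eq_zero_of_proportional {A B C A₁ B₁ C₁ x y : ℝ} (hB₁ : B₁ ≠ 0)
    (hA : A₁ * B = A * B₁) (hC : B₁ * C = B * C₁) (h₁ : A₁ * x - B₁ * y + C₁ = 0) :
    A * x - B * y + C = 0 := by
  refine (mul_eq_zero.1 ?_).resolve_left hB₁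
  linear_combination B * h₁ - x * hA + hC

theorem exists_common_point_of_boundedLineMeetsSegment (θ a : ℝ) {δ α β : ℝ}
    (hpair : δ * β ^ 2 < 1) (htriple : 6 * δ * α * β ^ 2 < 1) :
    ∃ x y : ℝ, ∀ A B C : ℤ, 0 < B → BoundedLineMeetsSegment_s14 θ a δ α β A B C →
      (A : ℝ) * x - B * y + C = 0 := by
  by_cases hne : ∃ A B C : ℤ, 0 < B ∧ BoundedLineMeetsSegment_s14 θ a δ α β A B C
  swap
  · push Not at hne
    exact ⟨0, 0, fun A B C hB h => (hne A B C hB h).elim⟩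
  obtain ⟨A₁, B₁, C₁, hB₁, h₁⟩ := hne
  by_cases hcross : ∃ A B C : ℤ, 0 < B ∧ BoundedLineMeetsSegment_s14 θ a δ α β A B C ∧ A₁ * B ≠ A * B₁
  · obtain ⟨A₂, B₂, C₂, -, h₂, hD⟩ := hcross
    have hD' : (A₁ : ℝ) * B₂ - A₂ * B₁ ≠ 0 := by exact_mod_cast sub_ne_zero.2 hD
    refine ⟨((B₁ : ℝ) * C₂ - B₂ * C₁) / (A₁ * B₂ - A₂ * B₁),
      ((A₁ : ℝ) * C₂ - A₂ * C₁) / (A₁ * B₂ - A₂ * B₁),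
      fun A B C _ h => line_eq_zero_of_det_eq_zero hD' ?_⟩
    exact_mod_cast Int.eq_zero_of_abs_cast_le_of_lt_one
      (by push_cast; exact h.abs_det_le h₁ h₂) htriple
  · push Not at hcross
    obtain ⟨t₁, -, he₁⟩ := h₁.meets
    refine ⟨θ, t₁, fun A B C hB h => ?_⟩
    have hA : A₁ * B = A * B₁ := hcross A B C hB h
    have hC : B₁ * C = B * C₁ := sub_eq_zero.1 <| Int.eq_zero_of_abs_cast_le_of_lt_one
      (by push_cast; exact h₁.abs_mul_sub_mul_le_of_parallel h (by exact_mod_cast hA)) hpair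
    exact line_eq_zero_of_proportional (by exact_mod_cast hB₁.ne') (by exact_mod_cast hA)
      (by exact_mod_cast hC) he₁

theorem abs_lt_rpow_of_mul_sq_lt {r e f A B : ℝ} (hr : 0 < r) (hB : r ^ f ≤ B)
    (h : B * A ^ 2 < r ^ e) : |A| < r ^ ((e - f) / 2) := by
  refine abs_lt_of_sq_lt_sq ?_ (by positivity)
  have hsq : (r ^ ((e - f) / 2)) ^ 2 = r ^ e / r ^ f := by
    rw [← Real.rpow_two, ← Real.rpow_mul hr.le, div_mul_cancel₀ _ two_ne_zero, Real.rpow_sub hr]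
  rw [hsq, lt_div_iff₀ (by positivity)]
  nlinarith [sq_nonneg A]

theorem six_mul_div_rpow_mul_rpow_mul_sq_lt_one {ρ lam κ n l : ℝ} (hρ : 2 < ρ)
    (hlam : 4 / 3 ≤ lam) (hl : 1 ≤ l) (hκ : κ ≤ (1 / 3) * ρ ^ (-(lam / 2))) :
    6 * (κ / ρ ^ (n - l)) * ρ ^ (n / 3 + lam * (l + 1) / 2) * (ρ ^ (n / 3 - lam * l)) ^ 2 < 1 := by
  have hρ0 : 0 < ρ := by linarith
  have hpow : ρ ^ (-(lam / 2)) / ρ ^ (n - l) * ρ ^ (n / 3 + lam * (l + 1) / 2)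
      * (ρ ^ (n / 3 - lam * l)) ^ 2 = ρ ^ (l * (1 - 3 * lam / 2)) := by
    have hsum : l * (1 - 3 * lam / 2) = -(lam / 2) - (n - l) + (n / 3 + lam * (l + 1) / 2)
        + ((n / 3 - lam * l) + (n / 3 - lam * l)) := by ring
    rw [hsum, Real.rpow_add hρ0 (-(lam / 2) - (n - l) + (n / 3 + lam * (l + 1) / 2)),
      Real.rpow_add hρ0 (-(lam / 2) - (n - l)), Real.rpow_add hρ0 (n / 3 - lam * l),
      Real.rpow_sub hρ0 (-(lam / 2))]
    ring
  have hdecay : ρ ^ (l * (1 - 3 * lam / 2)) ≤ ρ⁻¹ := by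
    rw [← Real.rpow_neg_one]
    exact Real.rpow_le_rpow_of_exponent_le (by linarith) (by nlinarith)
  calc 6 * (κ / ρ ^ (n - l)) * ρ ^ (n / 3 + lam * (l + 1) / 2) * (ρ ^ (n / 3 - lam * l)) ^ 2
      ≤ 6 * ((1 / 3) * ρ ^ (-(lam / 2)) / ρ ^ (n - l)) * ρ ^ (n / 3 + lam * (l + 1) / 2)
          * (ρ ^ (n / 3 - lam * l)) ^ 2 := by gcongr
    _ = 2 * ρ ^ (l * (1 - 3 * lam / 2)) := by rw [← hpow]; ring
    _ ≤ 2 * ρ⁻¹ := by gcongr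
    _ < 1 := by rw [← div_eq_mul_inv, div_lt_one hρ0]; linarith

theorem stmt_14_general (θ : ℝ) (R : ℕ) (hR : 2 ^ 422 ≤ R)
    (lam κ : ℝ) (hlam : lam = 1741 / 330)
    (hκ0 : 0 < κ) (hκ : κ ≤ (1 / 3) * (R : ℝ) ^ (-(lam / 2)))
    (n l : ℕ) (hl1 : 1 ≤ l)
    (a : ℝ) :
    ∃ x y : ℝ, ∀ A B C : ℤ, 0 < B →
      (∃ t ∈ Set.Icc a (a + κ / (R : ℝ) ^ ((n : ℝ) - l)),
        (A : ℝ) * θ - (B : ℝ) * t + (C : ℝ) = 0) →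
      ((B * max (A ^ 2) (B ^ 2) : ℤ) : ℝ) < (R : ℝ) ^ (n : ℝ) →
      (R : ℝ) ^ ((n : ℝ) / 3 - lam * (l + 1)) ≤ (B : ℝ) →
      (B : ℝ) ≤ (R : ℝ) ^ ((n : ℝ) / 3 - lam * l) →
      (A : ℝ) * x - (B : ℝ) * y + (C : ℝ) = 0 := by
  have hR2 : (2 : ℝ) < R :=
    Nat.ofNat_lt_cast.2 ((lt_self_pow₀ one_lt_two (by norm_num)).trans_le hR)
  have hR0 : (0 : ℝ) < R := by linarith
  set δ := κ / (R : ℝ) ^ ((n : ℝ) - l)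
  set α := (R : ℝ) ^ ((n : ℝ) / 3 + lam * (l + 1) / 2)
  set β := (R : ℝ) ^ ((n : ℝ) / 3 - lam * l)
  have htriple : 6 * δ * α * β ^ 2 < 1 := six_mul_div_rpow_mul_rpow_mul_sq_lt_one hR2
    (by norm_num [hlam]) (by exact_mod_cast hl1) hκ
  have hα : 1 ≤ α := Real.one_le_rpow (by linarith) (by rw [hlam]; positivity)
  have hpair : δ * β ^ 2 < 1 := by
    have : 0 ≤ δ * β ^ 2 := by positivity
    nlinarith
  obtain ⟨x, y, hxy⟩ := exists_common_point_of_boundedLineMeetsSegment θ a hpair htriple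
  refine ⟨x, y, fun A B C hB hmeets hH hlo hhi => hxy A B C hB ⟨?_, by positivity, hhi, hmeets⟩⟩
  have hA : (B : ℝ) * (A : ℝ) ^ 2 < (R : ℝ) ^ (n : ℝ) := hH.trans_le' <| by
    push_cast
    gcongr
    exact le_max_left _ _
  refine (abs_lt_rpow_of_mul_sq_lt hR0 hlo hA).le.trans_eq ?_
  congr 1
  ring

/-- Lemma 3*: all integer lines with `H(A,B) < R^n` and
`R^(n/3 − λ(l+1)) ≤ B ≤ R^(n/3 − λl)` intersecting a vertical segment of length
`κ/R^(n−l)` on `x = θ` pass through a single common point. -/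
theorem stmt_14 (θ : ℝ) (R : ℕ) (hR : 2 ^ 422 ≤ R)
    (lam κ : ℝ) (hlam : lam = 1741 / 330)
    (hκ0 : 0 < κ) (hκ : κ ≤ (1 / 3) * (R : ℝ) ^ (-(lam / 2)))
    (n l : ℕ) (hn : 1 ≤ n) (hl1 : 1 ≤ l) (hl2 : (l : ℝ) ≤ (n : ℝ) / (3 * lam))
    (a : ℝ) :
    ∃ x y : ℝ, ∀ A B C : ℤ, 0 < B →
      (∃ t ∈ Set.Icc a (a + κ / (R : ℝ) ^ ((n : ℝ) - l)),
        (A : ℝ) * θ - (B : ℝ) * t + (C : ℝ) = 0) →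
      ((B * max (A ^ 2) (B ^ 2) : ℤ) : ℝ) < (R : ℝ) ^ (n : ℝ) →
      (R : ℝ) ^ ((n : ℝ) / 3 - lam * (l + 1)) ≤ (B : ℝ) →
      (B : ℝ) ≤ (R : ℝ) ^ ((n : ℝ) / 3 - lam * l) →
      (A : ℝ) * x - (B : ℝ) * y + (C : ℝ) = 0 :=
  stmt_14_general θ R hR lam κ hlam hκ0 hκ n l hl1 a
end

section
/- Let T : ℕ → ℝ satisfy T_1 ≥ 1 and, for every n ≥ 1, T_{n+1} ≥ T_n·R − T_n·a − b·∑_{l=1}^{n−1} T_{n−l}, where R ≥ 2^422, a = 2^13·R^(52/55)·log R, b = 8·R^(52/55), and the T_m are nonnegative and nondecreasing ratios in the sense T_{n−l} ≤ T_n/(R − 2^14 R^(52/55) log R)^l for l ≥ 1 (inductively). Then T_n ≥ (R − 2^14·R^(52/55)·log R)^(n−1) > 0 for all n ≥ 1. -/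
/-!
Once `R - c ≥ 2`, the ratio hypothesis bounds the history sum `∑ T (n - l)` by the geometric
series `T n · ∑ 2⁻ˡ ≤ T n`, so the recursion gives `T (n + 1) ≥ T n · (R - a - b) ≥ T n · (R - c)`
and the bound follows by induction. The numerical input is `c ≤ 2R/3`, i.e.
`2^14 log R ≤ (2/3) R^(3/55)`, which holds as soon as `R^(3/55) ≥ 2^23`.
-/

open Finset Real

lemma sum_Icc_le_of_le_div_pow {f : ℕ → ℝ} {x D : ℝ} (hx : 0 ≤ x) (hD : 2 ≤ D) (m : ℕ)
    (hf : ∀ l ∈ Icc 1 m, f l ≤ x / D ^ l) : ∑ l ∈ Icc 1 m, f l ≤ x := by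
  have hgeom : ∑ l ∈ Icc 1 m, D⁻¹ ^ l ≤ 1 := by
    rw [← Finset.Ico_add_one_right_eq_Icc]
    refine (geom_sum_Ico_le_of_lt_one (by positivity) (inv_lt_one_of_one_lt₀ (by linarith))).trans ?_
    rw [pow_one, div_le_one (by rw [sub_pos]; exact inv_lt_one_of_one_lt₀ (by linarith)),
      le_sub_iff_add_le, ← two_mul, ← div_eq_mul_inv, div_le_one (by linarith)]
    exact hD
  calc ∑ l ∈ Icc 1 m, f l ≤ ∑ l ∈ Icc 1 m, x * D⁻¹ ^ l :=
        sum_le_sum fun l hl => by simpa [div_eq_mul_inv, inv_pow] using hf l hl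
    _ = x * ∑ l ∈ Icc 1 m, D⁻¹ ^ l := (mul_sum _ _ _).symm
    _ ≤ x := mul_le_of_le_one_right hx hgeom

theorem pow_sub_one_le_of_le_mul_sub_sum {T : ℕ → ℝ} {R a b c : ℝ} (hb : 0 ≤ b)
    (habc : a + b ≤ c) (hD : 2 ≤ R - c) (hT1 : 1 ≤ T 1)
    (hrec : ∀ n : ℕ, 1 ≤ n →
      T n * R - T n * a - b * ∑ l ∈ Icc 1 (n - 1), T (n - l) ≤ T (n + 1))
    (hratio : ∀ n l : ℕ, 1 ≤ l → l ≤ n - 1 → T (n - l) ≤ T n / (R - c) ^ l) :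
    ∀ n : ℕ, 1 ≤ n → (R - c) ^ (n - 1) ≤ T n := by
  intro n hn
  induction n, hn using Nat.le_induction with
  | base => simpa using hT1
  | succ n hn ih =>
    have hTn : 0 ≤ T n := (pow_pos (by linarith) _).le.trans ih
    have hsum : ∑ l ∈ Icc 1 (n - 1), T (n - l) ≤ T n :=
      sum_Icc_le_of_le_div_pow hTn hD (n - 1) fun l hl =>
        hratio n l (mem_Icc.1 hl).1 (mem_Icc.1 hl).2
    calc (R - c) ^ (n + 1 - 1) = (R - c) ^ (n - 1) * (R - c) := by
          rw [Nat.add_sub_cancel, pow_sub_one_mul (by omega)]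
      _ ≤ T n * (R - c) := mul_le_mul_of_nonneg_right ih (by linarith)
      _ ≤ T n * R - T n * a - b * T n := by nlinarith [mul_le_mul_of_nonneg_left habc hTn]
      _ ≤ T n * R - T n * a - b * ∑ l ∈ Icc 1 (n - 1), T (n - l) := by gcongr
      _ ≤ T (n + 1) := hrec n hn

section LargeR

variable {R : ℝ} (hR : (2 : ℝ) ^ 422 ≤ R)
include hR

lemma eight_le_of_two_pow_le : 8 ≤ R :=
  calc (8 : ℝ) = 2 ^ 3 := by norm_num
    _ ≤ 2 ^ 422 := pow_le_pow_right₀ one_le_two (by norm_num)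
    _ ≤ R := hR

lemma one_le_log_of_two_pow_le : 1 ≤ log R := by
  have := eight_le_of_two_pow_le hR
  rw [le_log_iff_exp_le (by linarith only [this])]
  linarith only [this, exp_one_lt_d9]

lemma two_pow_fourteen_mul_log_le : 2 ^ 14 * log R ≤ 2 / 3 * R ^ ((3 : ℝ) / 55) := by
  have hR0 : 0 < R := lt_of_lt_of_le (by positivity) hR
  set s := R ^ ((3 : ℝ) / 55) with hs
  have hs23 : (2 : ℝ) ^ 23 ≤ s := by
    calc (2 : ℝ) ^ 23 = ((2 : ℝ) ^ (422 : ℝ)) ^ ((23 : ℝ) / 422) := by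
          rw [← rpow_mul (by norm_num)]; norm_num
      _ ≤ ((2 : ℝ) ^ (422 : ℝ)) ^ ((3 : ℝ) / 55) :=
          rpow_le_rpow_of_exponent_le (one_le_rpow (by norm_num) (by norm_num)) (by norm_num)
      _ ≤ s := rpow_le_rpow (by positivity) (by exact_mod_cast hR) (by norm_num)
  have hlogR : log R = 55 / 3 * log s := by rw [hs, log_rpow hR0]; ring
  -- `log` lies below its tangent line at `2^23`
  have hlogs : log s ≤ 23 * log 2 + (s / 2 ^ 23 - 1) := by
    have h := log_le_sub_one_of_pos (x := s / 2 ^ 23) (by positivity)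
    rw [log_div (by positivity) (by positivity), log_pow] at h
    push_cast at h
    linarith
  rw [hlogR]
  linarith [log_two_lt_d9]

lemma two_le_sub_rpow_mul_log : 2 ≤ R - 2 ^ 14 * R ^ ((52 : ℝ) / 55) * log R := by
  have h8 := eight_le_of_two_pow_le hR
  have hR0 : 0 < R := by linarith only [h8]
  have hc : 2 ^ 14 * R ^ ((52 : ℝ) / 55) * log R ≤ 2 / 3 * R := by
    calc 2 ^ 14 * R ^ ((52 : ℝ) / 55) * log R
        = R ^ ((52 : ℝ) / 55) * (2 ^ 14 * log R) := by ring
      _ ≤ R ^ ((52 : ℝ) / 55) * (2 / 3 * R ^ ((3 : ℝ) / 55)) :=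
          mul_le_mul_of_nonneg_left (two_pow_fourteen_mul_log_le hR) (by positivity)
      _ = 2 / 3 * R := by rw [mul_left_comm, ← rpow_add hR0]; norm_num
  linarith only [h8, hc]

end LargeR

theorem stmt_18_general (R : ℝ) (hR : (2 : ℝ) ^ 422 ≤ R) (T : ℕ → ℝ)
    (a b c : ℝ)
    (ha : a = 2 ^ 13 * R ^ ((52 : ℝ) / 55) * Real.log R)
    (hb : b = 8 * R ^ ((52 : ℝ) / 55))
    (hc : c = 2 ^ 14 * R ^ ((52 : ℝ) / 55) * Real.log R)
    (hT1 : 1 ≤ T 1)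
    (hrec : ∀ n : ℕ, 1 ≤ n →
      T n * R - T n * a - b * ∑ l ∈ Finset.Icc 1 (n - 1), T (n - l) ≤ T (n + 1))
    (hratio : ∀ n l : ℕ, 1 ≤ l → l ≤ n - 1 → T (n - l) ≤ T n / (R - c) ^ l) :
    ∀ n : ℕ, 1 ≤ n → (R - c) ^ (n - 1) ≤ T n ∧ 0 < T n := by
  have hD : 2 ≤ R - c := hc ▸ two_le_sub_rpow_mul_log hR
  have hp : 0 ≤ R ^ ((52 : ℝ) / 55) := rpow_nonneg (by linarith only [eight_le_of_two_pow_le hR]) _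
  have habc : a + b ≤ c := by
    subst ha hb hc
    nlinarith [mul_le_mul_of_nonneg_left (one_le_log_of_two_pow_le hR) hp]
  have hb0 : 0 ≤ b := hb ▸ by positivity
  intro n hn
  have hTn := pow_sub_one_le_of_le_mul_sub_sum hb0 habc hD hT1 hrec hratio n hn
  exact ⟨hTn, (pow_pos (by linarith only [hD]) _).trans_le hTn⟩

/-- The counting recursion concluding the proof of Proposition 1: with
`a = 2^13 R^(52/55) log R`, `b = 8 R^(52/55)` and
`c = 2^14 R^(52/55) log R`, if `T 1 ≥ 1`, the `T n` are nonnegative,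
`T (n+1) ≥ T n · R − T n · a − b·∑_{l=1}^{n−1} T (n−l)`, and
`T (n−l) ≤ T n / (R − c)^l` for `1 ≤ l ≤ n−1`, then
`T n ≥ (R − c)^(n−1) > 0` for all `n ≥ 1`. -/
theorem stmt_18 (R : ℝ) (hR : (2 : ℝ) ^ 422 ≤ R) (T : ℕ → ℝ)
    (a b c : ℝ)
    (ha : a = 2 ^ 13 * R ^ ((52 : ℝ) / 55) * Real.log R)
    (hb : b = 8 * R ^ ((52 : ℝ) / 55))
    (hc : c = 2 ^ 14 * R ^ ((52 : ℝ) / 55) * Real.log R)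
    (hT1 : 1 ≤ T 1) (hTnn : ∀ n, 0 ≤ T n)
    (hrec : ∀ n : ℕ, 1 ≤ n →
      T n * R - T n * a - b * ∑ l ∈ Finset.Icc 1 (n - 1), T (n - l) ≤ T (n + 1))
    (hratio : ∀ n l : ℕ, 1 ≤ l → l ≤ n - 1 → T (n - l) ≤ T n / (R - c) ^ l) :
    ∀ n : ℕ, 1 ≤ n → (R - c) ^ (n - 1) ≤ T n ∧ 0 < T n :=
  stmt_18_general R hR T a b c ha hb hc hT1 hrec hratio
end
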